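/- arXiv:1901.07780 — 2 statements merged into one kernel-verified Lean document; each statement's English description precedes it below -/
import Mathlib

section
/- For a ∈ D let h_a(z) = (z − a)/(1 − conj(a)·z), a disk automorphism. Then for every integer n ≥ 1, sup_{z∈D} (1−|z|²)·|d/dz [(h_a(z))^n − z^n]| tends to 0 as a → 0 with a ∈ D. (This is the key estimate proving strong continuity of the composition groups on the little Bloch space, by density of polynomials.) -/
/-!
Write `φ = h_a` and `d = 1 − conj(a)·z`. By the chain rule the derivative of `φⁿ − zⁿ` is
`n (φ^{n−1} φ' − z^{n−1})` with `φ' = (1 − |a|²)/d²`. For `|a| ≤ 1/2` and `|z| ≤ 1` we have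
`|d| ≥ 1/2`, hence `|φ(z) − z| ≤ 4|a|` and `|φ'(z) − 1| ≤ 12|a|`, and the Lipschitz bound for
`w ↦ w^{n−1}` on a disc turns this into `|(φⁿ − zⁿ)'(z)| ≤ C_n |a|` uniformly in `z`.
Since `1 − |z|² ≤ 1`, the Bloch seminorm is at most `C_n |a|`.
-/

open ComplexConjugate Topology

lemma norm_pow_sub_pow_le {R : Type*} [SeminormedRing R] [NormOneClass R] {x y : R} {r : ℝ}
    (hx : ‖x‖ ≤ r) (hy : ‖y‖ ≤ r) (m : ℕ) :
    ‖x ^ m - y ^ m‖ ≤ m * r ^ (m - 1) * ‖x - y‖ := by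
  induction m with
  | zero => simp
  | succ m ih =>
    have hr : 0 ≤ r := (norm_nonneg x).trans hx
    calc ‖x ^ (m + 1) - y ^ (m + 1)‖ = ‖x * (x ^ m - y ^ m) + (x - y) * y ^ m‖ := by
          simp only [pow_succ', mul_sub, sub_mul, sub_add_sub_cancel]
      _ ≤ ‖x‖ * ‖x ^ m - y ^ m‖ + ‖x - y‖ * ‖y‖ ^ m :=
          norm_add_le_of_le (norm_mul_le _ _)
            ((norm_mul_le _ _).trans (by gcongr; exact norm_pow_le y m))
      _ ≤ r * (m * r ^ (m - 1) * ‖x - y‖) + ‖x - y‖ * r ^ m := by gcongr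
      _ = (m + 1 : ℕ) * r ^ (m + 1 - 1) * ‖x - y‖ := by
          obtain rfl | hm := eq_or_ne m 0
          · simp
          · push_cast
            linear_combination (m * ‖x - y‖) * mul_pow_sub_one hm r

lemma norm_pow_mul_sub_pow_le {R : Type*} [SeminormedRing R] [NormOneClass R] {x y p : R}
    {r : ℝ} (hx : ‖x‖ ≤ r) (hy : ‖y‖ ≤ r) (m : ℕ) :
    ‖x ^ m * p - y ^ m‖ ≤ m * r ^ (m - 1) * ‖x - y‖ + r ^ m * ‖p - 1‖ :=
  calc ‖x ^ m * p - y ^ m‖ = ‖(x ^ m - y ^ m) + x ^ m * (p - 1)‖ := by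
        rw [mul_sub, mul_one, sub_add_sub_cancel']
    _ ≤ ‖x ^ m - y ^ m‖ + ‖x‖ ^ m * ‖p - 1‖ :=
        norm_add_le_of_le le_rfl ((norm_mul_le _ _).trans (by gcongr; exact norm_pow_le x m))
    _ ≤ m * r ^ (m - 1) * ‖x - y‖ + r ^ m * ‖p - 1‖ := by
        have hr : 0 ≤ r := (norm_nonneg x).trans hx
        gcongr
        exact norm_pow_sub_pow_le hx hy m

noncomputable def discAut (a w : ℂ) : ℂ := (w - a) / (1 - conj a * w)

lemma hasDerivAt_discAut {a z : ℂ} (hz : 1 - conj a * z ≠ 0) :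
    HasDerivAt (discAut a) ((1 - (‖a‖ : ℂ) ^ 2) / (1 - conj a * z) ^ 2) z := by
  refine (((hasDerivAt_id z).sub_const a).div
    (((hasDerivAt_id z).const_mul (conj a)).const_sub 1) hz).congr_deriv ?_
  rw [← Complex.conj_mul']
  simp only [id, mul_one]
  ring

section SmallParameter

variable {a z : ℂ} (ha : ‖a‖ ≤ 1 / 2) (hz : ‖z‖ ≤ 1)
include ha hz

lemma half_le_norm_one_sub_conj_mul : 1 / 2 ≤ ‖1 - conj a * z‖ := by
  have h : ‖conj a * z‖ ≤ 1 / 2 := by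
    rw [norm_mul, Complex.norm_conj]
    nlinarith [norm_nonneg a, norm_nonneg z]
  have := norm_sub_norm_le (1 : ℂ) (conj a * z)
  rw [norm_one] at this
  linarith

lemma norm_discAut_sub_self_le : ‖discAut a z - z‖ ≤ 4 * ‖a‖ := by
  have hd := half_le_norm_one_sub_conj_mul ha hz
  have hd0 : 1 - conj a * z ≠ 0 := norm_pos_iff.mp (by linarith)
  have hnum : ‖conj a * z ^ 2 - a‖ ≤ 2 * ‖a‖ := by
    refine (norm_sub_le _ _).trans ?_
    rw [norm_mul, norm_pow, Complex.norm_conj]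
    nlinarith [norm_nonneg a, pow_le_one₀ (n := 2) (norm_nonneg z) hz]
  rw [discAut, div_sub' hd0, norm_div]
  refine div_le_of_le_mul₀ (norm_nonneg _) (by positivity) ?_
  calc ‖z - a - (1 - conj a * z) * z‖ = ‖conj a * z ^ 2 - a‖ := by ring_nf
    _ ≤ 4 * ‖a‖ * (1 / 2) := by linarith
    _ ≤ 4 * ‖a‖ * ‖1 - conj a * z‖ := by gcongr

lemma norm_deriv_discAut_sub_one_le :
    ‖(1 - (‖a‖ : ℂ) ^ 2) / (1 - conj a * z) ^ 2 - 1‖ ≤ 12 * ‖a‖ := by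
  have hd := half_le_norm_one_sub_conj_mul ha hz
  have hd0 : (1 - conj a * z) ^ 2 ≠ 0 := pow_ne_zero 2 (norm_pos_iff.mp (by linarith))
  have hcz : ‖conj a * z‖ ≤ ‖a‖ := by
    rw [norm_mul, Complex.norm_conj]
    exact mul_le_of_le_one_right (norm_nonneg a) hz
  have hnum : ‖conj a * z * (2 - conj a * z) - (‖a‖ : ℂ) ^ 2‖ ≤ 3 * ‖a‖ := by
    have h2 : ‖2 - conj a * z‖ ≤ 5 / 2 :=
      (norm_sub_le _ _).trans (by rw [Complex.norm_ofNat]; linarith)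
    refine (norm_sub_le _ _).trans ?_
    rw [norm_mul, norm_pow, Complex.norm_real, norm_norm]
    nlinarith [norm_nonneg a, norm_nonneg (conj a * z)]
  rw [div_sub_one hd0, norm_div, norm_pow]
  refine div_le_of_le_mul₀ (by positivity) (by positivity) ?_
  calc ‖1 - (‖a‖ : ℂ) ^ 2 - (1 - conj a * z) ^ 2‖
        = ‖conj a * z * (2 - conj a * z) - (‖a‖ : ℂ) ^ 2‖ := by ring_nf
    _ ≤ 12 * ‖a‖ * (1 / 2) ^ 2 := by linarith
    _ ≤ 12 * ‖a‖ * ‖1 - conj a * z‖ ^ 2 := by gcongr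

lemma norm_discAut_le_three : ‖discAut a z‖ ≤ 3 :=
  calc ‖discAut a z‖ = ‖z + (discAut a z - z)‖ := by rw [add_sub_cancel]
    _ ≤ ‖z‖ + ‖discAut a z - z‖ := norm_add_le _ _
    _ ≤ 3 := by linarith [norm_discAut_sub_self_le ha hz]

end SmallParameter

lemma exists_norm_deriv_discAut_pow_sub_pow_le (n : ℕ) :
    ∃ C : ℝ, ∀ a z : ℂ, ‖a‖ ≤ 1 / 2 → ‖z‖ ≤ 1 →
      ‖deriv (fun w => discAut a w ^ n - w ^ n) z‖ ≤ C * ‖a‖ := by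
  refine ⟨n * ((n - 1 : ℕ) * 3 ^ (n - 2) * 4 + 3 ^ (n - 1) * 12), fun a z ha hz => ?_⟩
  have hd0 : 1 - conj a * z ≠ 0 :=
    norm_pos_iff.mp ((one_half_pos).trans_le (half_le_norm_one_sub_conj_mul ha hz))
  set φ' := (1 - (‖a‖ : ℂ) ^ 2) / (1 - conj a * z) ^ 2
  have hderiv : HasDerivAt (fun w => discAut a w ^ n - w ^ n)
      (n * discAut a z ^ (n - 1) * φ' - n * z ^ (n - 1)) z :=
    ((hasDerivAt_discAut hd0).pow n).sub (hasDerivAt_pow n z)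
  calc ‖deriv (fun w => discAut a w ^ n - w ^ n) z‖
        = n * ‖discAut a z ^ (n - 1) * φ' - z ^ (n - 1)‖ := by
          rw [hderiv.deriv, mul_assoc, ← mul_sub, norm_mul, Complex.norm_natCast]
    _ ≤ n * ((n - 1 : ℕ) * 3 ^ (n - 1 - 1) * ‖discAut a z - z‖ + 3 ^ (n - 1) * ‖φ' - 1‖) := by
          gcongr (n : ℝ) * ?_
          exact norm_pow_mul_sub_pow_le (norm_discAut_le_three ha hz) (by linarith) _
    _ ≤ n * ((n - 1 : ℕ) * 3 ^ (n - 2) * (4 * ‖a‖) + 3 ^ (n - 1) * (12 * ‖a‖)) := by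
          gcongr (n : ℝ) * (_ * ?_ + _ * ?_)
          · exact norm_discAut_sub_self_le ha hz
          · exact norm_deriv_discAut_sub_one_le ha hz
    _ = _ := by ring

theorem bloch_seminorm_disc_automorphism_power_tendsto_general (n : ℕ) :
    Filter.Tendsto
      (fun a : ℂ => ⨆ z : {z : ℂ // ‖z‖ < 1},
        ENNReal.ofReal ((1 - ‖z.1‖ ^ 2) *
          ‖deriv
            (fun w : ℂ => ((w - a) / (1 - (starRingEnd ℂ) a * w)) ^ n - w ^ n) z.1‖))
      (nhdsWithin 0 {a : ℂ | ‖a‖ < 1}) (nhds 0) := by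
  obtain ⟨C, hC⟩ := exists_norm_deriv_discAut_pow_sub_pow_le n
  have hbound : ∀ᶠ a in 𝓝 (0 : ℂ), (⨆ z : {z : ℂ // ‖z‖ < 1},
      ENNReal.ofReal ((1 - ‖z.1‖ ^ 2) *
        ‖deriv (fun w => discAut a w ^ n - w ^ n) z.1‖)) ≤ ENNReal.ofReal (C * ‖a‖) := by
    filter_upwards [Metric.closedBall_mem_nhds (0 : ℂ) one_half_pos] with a ha
    rw [mem_closedBall_zero_iff] at ha
    refine iSup_le fun z => ENNReal.ofReal_le_ofReal ?_
    calc (1 - ‖z.1‖ ^ 2) * ‖deriv (fun w => discAut a w ^ n - w ^ n) z.1‖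
        ≤ 1 * ‖deriv (fun w => discAut a w ^ n - w ^ n) z.1‖ := by
          gcongr; linarith [sq_nonneg ‖z.1‖]
      _ ≤ C * ‖a‖ := by rw [one_mul]; exact hC a z ha z.2.le
  have hlim : Filter.Tendsto (fun a : ℂ => ENNReal.ofReal (C * ‖a‖)) (𝓝 0) (𝓝 0) := by
    simpa using ENNReal.tendsto_ofReal ((continuous_const.mul (continuous_norm (E := ℂ))).tendsto 0)
  exact (tendsto_of_tendsto_of_tendsto_of_le_of_le' tendsto_const_nhds hlim
    (Filter.Eventually.of_forall fun _ => zero_le) hbound).mono_left nhdsWithin_le_nhds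

/-- For the disk automorphisms `h_a(z) = (z−a)/(1−conj(a)z)` and each `n ≥ 1`, the Bloch
seminorm of `h_a^n − z^n` tends to `0` as `a → 0` in the disk. -/
theorem bloch_seminorm_disc_automorphism_power_tendsto (n : ℕ) (hn : 1 ≤ n) :
    Filter.Tendsto
      (fun a : ℂ => ⨆ z : {z : ℂ // ‖z‖ < 1},
        ENNReal.ofReal ((1 - ‖z.1‖ ^ 2) *
          ‖deriv
            (fun w : ℂ => ((w - a) / (1 - (starRingEnd ℂ) a * w)) ^ n - w ^ n) z.1‖))
      (nhdsWithin 0 {a : ℂ | ‖a‖ < 1}) (nhds 0) :=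
  bloch_seminorm_disc_automorphism_power_tendsto_general n
end

section
/- Let λ ∈ ℂ with Re(λ) > 0 and let h be analytic on the upper half-plane U with M := sup_{ω∈U} Im(ω)|h′(ω)| < ∞. Then for every ω ∈ U the integral f(ω) := ∫_0^∞ e^{−λt} h(e^t ω) dt converges absolutely, f is complex-differentiable on U, and λ·f(ω) − ω·f′(ω) = h(ω) for all ω ∈ U. (This is the resolvent formula R(λ,Γ)h(ω) = ω^λ ∫_ω^∞ z^{−λ−1} h(z) dz for the generator Γg(ω) = ωg′(ω) of the scaling composition group.) -/
open Complex Filter Set MeasureTheory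

/-!
Along the ray `s ↦ eˢω` the function `g(s) = h(eˢω)` has derivative `(Γh)(eˢω)`, and the Bloch
bound gives `‖z h′(z)‖ ≤ M ‖z‖ / Im z`, a quantity invariant under positive scaling. Hence `g` grows
at most linearly, so `e^{−λs} g(s)` is integrable and tends to `0`; the `ω`-derivative of the
integrand is dominated by `M / Im ω · e^{−Re λ · s}` locally uniformly in `ω`, which allows
differentiation under the integral sign. Finally `ω ∂_ω [e^{−λs} g(s)] = e^{−λs} g′(s)`, so
integrating `d/ds [e^{−λs} g(s)] = −λ e^{−λs} g(s) + e^{−λs} g′(s)` over `(0, ∞)` gives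
`−h(ω) = −λ f(ω) + ω f′(ω)`.
-/

open UpperHalfPlane

local notation "ℍₒ" => upperHalfPlaneSet

namespace ScalingResolvent

section LinearGrowth

variable {E : Type*} [NormedAddCommGroup E] [NormedSpace ℂ E] {lam : ℂ} {g : ℝ → E} {C D : ℝ}

lemma add_mul_le_mul_exp {a t : ℝ} (ha : 0 < a) (hC : 0 ≤ C) (hD : 0 ≤ D) (ht : 0 ≤ t) :
    C + D * t ≤ (C + 2 * D / a) * Real.exp (a / 2 * t) := by
  have hexp : 1 ≤ Real.exp (a / 2 * t) := Real.one_le_exp (by positivity)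
  have ht_le : t ≤ 2 / a * Real.exp (a / 2 * t) := by
    rw [div_mul_eq_mul_div, le_div_iff₀ ha]
    nlinarith [Real.add_one_le_exp (a / 2 * t)]
  calc C + D * t ≤ C * Real.exp (a / 2 * t) + D * (2 / a * Real.exp (a / 2 * t)) :=
        add_le_add (le_mul_of_one_le_right hC hexp) (mul_le_mul_of_nonneg_left ht_le hD)
    _ = (C + 2 * D / a) * Real.exp (a / 2 * t) := by ring

lemma norm_cexp_neg_mul (lam : ℂ) (t : ℝ) : ‖cexp (-(lam * t))‖ = Real.exp (-lam.re * t) := by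
  simp [Complex.norm_exp, Complex.mul_re]

lemma norm_cexp_neg_mul_smul_le (hlam : 0 < lam.re) (hD : 0 ≤ D)
    (hg : ∀ t, 0 ≤ t → ‖g t‖ ≤ C + D * t) {t : ℝ} (ht : 0 ≤ t) :
    ‖cexp (-(lam * t)) • g t‖ ≤ (C + 2 * D / lam.re) * Real.exp (-(lam.re / 2) * t) := by
  have hC : 0 ≤ C := by simpa using (norm_nonneg _).trans (hg 0 le_rfl)
  calc ‖cexp (-(lam * t)) • g t‖ = Real.exp (-lam.re * t) * ‖g t‖ := by
        rw [norm_smul, norm_cexp_neg_mul]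
    _ ≤ Real.exp (-lam.re * t) * ((C + 2 * D / lam.re) * Real.exp (lam.re / 2 * t)) :=
        mul_le_mul_of_nonneg_left ((hg t ht).trans (add_mul_le_mul_exp hlam hC hD ht))
          (Real.exp_pos _).le
    _ = (C + 2 * D / lam.re) * Real.exp (-(lam.re / 2) * t) := by
        rw [mul_left_comm, ← Real.exp_add]; ring_nf

lemma integrableOn_cexp_neg_mul_smul (hlam : 0 < lam.re) (hD : 0 ≤ D)
    (hg : ∀ t, 0 ≤ t → ‖g t‖ ≤ C + D * t)
    (hg_meas : AEStronglyMeasurable g (volume.restrict (Ioi 0))) :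
    IntegrableOn (fun t : ℝ => cexp (-(lam * t)) • g t) (Ioi 0) := by
  refine Integrable.mono'
    ((exp_neg_integrableOn_Ioi 0 (half_pos hlam)).const_mul (C + 2 * D / lam.re))
    (((continuous_ofReal.const_mul lam).neg.cexp).aestronglyMeasurable.smul hg_meas) ?_
  filter_upwards [ae_restrict_mem measurableSet_Ioi] with t ht
  exact norm_cexp_neg_mul_smul_le hlam hD hg (le_of_lt ht)

lemma tendsto_cexp_neg_mul_smul (hlam : 0 < lam.re) (hD : 0 ≤ D)
    (hg : ∀ t, 0 ≤ t → ‖g t‖ ≤ C + D * t) :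
    Tendsto (fun t : ℝ => cexp (-(lam * t)) • g t) atTop (nhds 0) := by
  have hexp : Tendsto (fun t : ℝ => Real.exp (-(lam.re / 2) * t)) atTop (nhds 0) :=
    Real.tendsto_exp_atBot.comp
      (tendsto_id.const_mul_atTop_of_neg (neg_lt_zero.2 (half_pos hlam)))
  refine squeeze_zero_norm' ?_ (by simpa only [mul_zero] using hexp.const_mul (C + 2 * D / lam.re))
  filter_upwards [eventually_ge_atTop 0] with t ht
  exact norm_cexp_neg_mul_smul_le hlam hD hg ht

end LinearGrowth

section Bloch

variable {lam : ℂ} {h : ℂ → ℂ} {M : ℝ} {ω : ℂ}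

lemma exp_mul_mem (hω : ω ∈ ℍₒ) (s : ℝ) : (Real.exp s : ℂ) * ω ∈ ℍₒ := by
  show 0 < ((Real.exp s : ℂ) * ω).im
  rw [im_ofReal_mul]
  exact mul_pos (Real.exp_pos s) hω

lemma bloch_nonneg (hM : ∀ z ∈ ℍₒ, z.im * ‖deriv h z‖ ≤ M) (hω : ω ∈ ℍₒ) : 0 ≤ M :=
  (mul_nonneg hω.le (norm_nonneg _)).trans (hM ω hω)

lemma hasDerivAt_comp_exp_mul {t : ℝ} (hd : DifferentiableAt ℂ h (Real.exp t * ω)) :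
    HasDerivAt (fun s : ℝ => h (Real.exp s * ω)) (ω * (Real.exp t * deriv h (Real.exp t * ω))) t :=
  (hd.hasDerivAt.comp t ((Real.hasDerivAt_exp t).ofReal_comp.mul_const ω)).congr_deriv
    (by ring)

lemma hasDerivAt_comp_ofReal_mul (r : ℝ) {w : ℂ} (hd : DifferentiableAt ℂ h (r * w)) :
    HasDerivAt (fun w : ℂ => h (r * w)) (r * deriv h (r * w)) w :=
  (hd.hasDerivAt.comp w ((hasDerivAt_id w).const_mul (r : ℂ))).congr_deriv (by ring)

lemma norm_exp_mul_deriv_le (hM : ∀ z ∈ ℍₒ, z.im * ‖deriv h z‖ ≤ M) (hω : ω ∈ ℍₒ) (s : ℝ) :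
    ‖(Real.exp s : ℂ) * deriv h (Real.exp s * ω)‖ ≤ M / ω.im := by
  have hbloch := hM _ (exp_mul_mem hω s)
  rw [im_ofReal_mul, mul_assoc] at hbloch
  rw [norm_mul, norm_real, Real.norm_of_nonneg (Real.exp_pos s).le, le_div_iff₀ hω]
  nlinarith [Real.exp_pos s]

lemma norm_comp_exp_mul_le (hh : DifferentiableOn ℂ h ℍₒ)
    (hM : ∀ z ∈ ℍₒ, z.im * ‖deriv h z‖ ≤ M) (hω : ω ∈ ℍₒ) {t : ℝ} (ht : 0 ≤ t) :
    ‖h (Real.exp t * ω)‖ ≤ ‖h ω‖ + ‖ω‖ * (M / ω.im) * t := by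
  have hray := Convex.norm_image_sub_le_of_norm_hasDerivWithin_le
    (fun s _ => (hasDerivAt_comp_exp_mul (hh.differentiableAt
      (isOpen_upperHalfPlaneSet.mem_nhds (exp_mul_mem hω s)))).hasDerivWithinAt)
    (fun s _ => by
      rw [norm_mul]
      exact mul_le_mul_of_nonneg_left (norm_exp_mul_deriv_le hM hω s) (norm_nonneg ω))
    (convex_Ici 0) self_mem_Ici ht
  simp only [Real.exp_zero, ofReal_one, one_mul, sub_zero, Real.norm_of_nonneg ht] at hray
  linarith [norm_sub_norm_le (h (Real.exp t * ω)) (h ω)]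

lemma continuous_comp_exp_mul (hh : DifferentiableOn ℂ h ℍₒ) (hω : ω ∈ ℍₒ) :
    Continuous fun s : ℝ => h (Real.exp s * ω) :=
  continuous_iff_continuousAt.2 fun t => (hasDerivAt_comp_exp_mul (hh.differentiableAt
    (isOpen_upperHalfPlaneSet.mem_nhds (exp_mul_mem hω t)))).continuousAt

lemma continuous_exp_mul_deriv_comp_exp_mul (hh : DifferentiableOn ℂ h ℍₒ) (hω : ω ∈ ℍₒ) :
    Continuous fun s : ℝ => (Real.exp s : ℂ) * deriv h (Real.exp s * ω) :=
  (continuous_ofReal.comp Real.continuous_exp).mul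
    ((hh.deriv isOpen_upperHalfPlaneSet).continuousOn.comp_continuous
      ((continuous_ofReal.comp Real.continuous_exp).mul continuous_const) (exp_mul_mem hω))

lemma integrableOn_cexp_neg_mul_comp_exp_mul (hlam : 0 < lam.re) (hh : DifferentiableOn ℂ h ℍₒ)
    (hM : ∀ z ∈ ℍₒ, z.im * ‖deriv h z‖ ≤ M) (hω : ω ∈ ℍₒ) :
    IntegrableOn (fun s : ℝ => cexp (-(lam * s)) * h (Real.exp s * ω)) (Ioi 0) :=
  integrableOn_cexp_neg_mul_smul hlam
    (mul_nonneg (norm_nonneg ω) (div_nonneg (bloch_nonneg hM hω) hω.le))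
    (fun _ => norm_comp_exp_mul_le hh hM hω) (continuous_comp_exp_mul hh hω).aestronglyMeasurable

lemma tendsto_cexp_neg_mul_comp_exp_mul (hlam : 0 < lam.re) (hh : DifferentiableOn ℂ h ℍₒ)
    (hM : ∀ z ∈ ℍₒ, z.im * ‖deriv h z‖ ≤ M) (hω : ω ∈ ℍₒ) :
    Tendsto (fun s : ℝ => cexp (-(lam * s)) * h (Real.exp s * ω)) atTop (nhds 0) :=
  tendsto_cexp_neg_mul_smul hlam
    (mul_nonneg (norm_nonneg ω) (div_nonneg (bloch_nonneg hM hω) hω.le))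
    (fun _ => norm_comp_exp_mul_le hh hM hω)

lemma hasDerivAt_integral_cexp_neg_mul_comp_exp_mul (hlam : 0 < lam.re)
    (hh : DifferentiableOn ℂ h ℍₒ) (hM : ∀ z ∈ ℍₒ, z.im * ‖deriv h z‖ ≤ M) (hω : ω ∈ ℍₒ) :
    IntegrableOn (fun s : ℝ => cexp (-(lam * s)) * (Real.exp s * deriv h (Real.exp s * ω)))
        (Ioi 0) ∧
      HasDerivAt (fun w : ℂ => ∫ s in Ioi (0 : ℝ), cexp (-(lam * s)) * h (Real.exp s * w))
        (∫ s in Ioi (0 : ℝ), cexp (-(lam * s)) * (Real.exp s * deriv h (Real.exp s * ω))) ω := by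
  have hnhds : {w : ℂ | ω.im / 2 < w.im} ∈ nhds ω :=
    (isOpen_lt continuous_const Complex.continuous_im).mem_nhds (half_lt_self (α := ℝ) hω)
  have hmem : ∀ w ∈ {w : ℂ | ω.im / 2 < w.im}, w ∈ ℍₒ := fun w (hw : ω.im / 2 < w.im) =>
    (half_pos hω).trans hw
  refine hasDerivAt_integral_of_dominated_loc_of_deriv_le (μ := volume.restrict (Ioi 0)) hnhds
    (F := fun w s => cexp (-(lam * s)) * h (Real.exp s * w))
    (F' := fun w s => cexp (-(lam * s)) * (Real.exp s * deriv h (Real.exp s * w)))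
    (bound := fun s => M / (ω.im / 2) * Real.exp (-lam.re * s)) ?_
    (integrableOn_cexp_neg_mul_comp_exp_mul hlam hh hM hω)
    ((continuous_ofReal.const_mul lam).neg.cexp.mul
      (continuous_exp_mul_deriv_comp_exp_mul hh hω)).aestronglyMeasurable
    (ae_of_all _ fun s w hw => ?_) ((exp_neg_integrableOn_Ioi 0 hlam).const_mul _)
    (ae_of_all _ fun s w hw => ?_)
  · filter_upwards [hnhds] with w hw
    exact ((continuous_ofReal.const_mul lam).neg.cexp.mul
      (continuous_comp_exp_mul hh (hmem w hw))).aestronglyMeasurable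
  · calc ‖cexp (-(lam * s)) * (Real.exp s * deriv h (Real.exp s * w))‖
        ≤ Real.exp (-lam.re * s) * (M / w.im) := by
          rw [norm_mul, norm_cexp_neg_mul]
          exact mul_le_mul_of_nonneg_left (norm_exp_mul_deriv_le hM (hmem w hw) s) (by positivity)
      _ ≤ M / (ω.im / 2) * Real.exp (-lam.re * s) := by
          rw [mul_comm]
          exact mul_le_mul_of_nonneg_right
            (div_le_div_of_nonneg_left (bloch_nonneg hM hω) (half_pos hω) hw.le) (by positivity)
  · exact (hasDerivAt_comp_ofReal_mul _ (hh.differentiableAt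
      (isOpen_upperHalfPlaneSet.mem_nhds (exp_mul_mem (hmem w hw) s)))).const_mul _

lemma mul_integral_sub_mul_integral_deriv (hlam : 0 < lam.re) (hh : DifferentiableOn ℂ h ℍₒ)
    (hM : ∀ z ∈ ℍₒ, z.im * ‖deriv h z‖ ≤ M) (hω : ω ∈ ℍₒ) :
    lam * (∫ s in Ioi (0 : ℝ), cexp (-(lam * s)) * h (Real.exp s * ω))
      - ω * ∫ s in Ioi (0 : ℝ), cexp (-(lam * s)) * (Real.exp s * deriv h (Real.exp s * ω))
      = h ω := by
  have hF := integrableOn_cexp_neg_mul_comp_exp_mul hlam hh hM hω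
  have hG := (hasDerivAt_integral_cexp_neg_mul_comp_exp_mul hlam hh hM hω).1
  have hderiv : ∀ t ∈ Ici (0 : ℝ), HasDerivAt (fun s : ℝ => cexp (-(lam * s)) * h (Real.exp s * ω))
      (-lam * (cexp (-(lam * t)) * h (Real.exp t * ω))
        + ω * (cexp (-(lam * t)) * (Real.exp t * deriv h (Real.exp t * ω)))) t := fun t _ =>
    ((((hasDerivAt_id (t : ℂ)).const_mul lam).neg.cexp.comp_ofReal).mul
      (hasDerivAt_comp_exp_mul (hh.differentiableAt
        (isOpen_upperHalfPlaneSet.mem_nhds (exp_mul_mem hω t))))).congr_deriv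
      (by simp only [Pi.neg_apply, id_eq, mul_one]; ring)
  have hFTC := integral_Ioi_of_hasDerivAt_of_tendsto' hderiv
    ((hF.const_mul (-lam)).add (hG.const_mul ω)) (tendsto_cexp_neg_mul_comp_exp_mul hlam hh hM hω)
  rw [integral_add (hF.const_mul _) (hG.const_mul _), integral_const_mul, integral_const_mul]
    at hFTC
  simp only [ofReal_zero, mul_zero, neg_zero, Complex.exp_zero, Real.exp_zero, ofReal_one,
    one_mul] at hFTC
  linear_combination -hFTC

end Bloch

end ScalingResolvent

open ScalingResolvent in
/-- Resolvent formula for the generator of the scaling group, case `Re(λ) > 0`: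
for `h` analytic on `U` with bounded Bloch seminorm, `f(ω) = ∫_0^∞ e^{−λt} h(e^t ω) dt`
converges absolutely, is complex-differentiable on `U`, and `λf(ω) − ωf′(ω) = h(ω)`. -/
theorem resolvent_scaling_re_pos (lam : ℂ) (hlam : 0 < lam.re) (h : ℂ → ℂ)
    (hh : DifferentiableOn ℂ h {w : ℂ | 0 < w.im})
    (M : ℝ) (hM : ∀ ω ∈ {w : ℂ | 0 < w.im}, ω.im * ‖deriv h ω‖ ≤ M) :
    (∀ ω ∈ {w : ℂ | 0 < w.im},
        IntegrableOn (fun s : ℝ => Complex.exp (-(lam * s)) * h ((Real.exp s : ℂ) * ω))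
          (Set.Ioi 0) volume) ∧
    (∀ ω ∈ {w : ℂ | 0 < w.im},
        DifferentiableAt ℂ
          (fun w : ℂ => ∫ s in Set.Ioi (0 : ℝ),
            Complex.exp (-(lam * s)) * h ((Real.exp s : ℂ) * w)) ω) ∧
    (∀ ω ∈ {w : ℂ | 0 < w.im},
        lam * (∫ s in Set.Ioi (0 : ℝ), Complex.exp (-(lam * s)) * h ((Real.exp s : ℂ) * ω))
          - ω * deriv (fun w : ℂ => ∫ s in Set.Ioi (0 : ℝ),
              Complex.exp (-(lam * s)) * h ((Real.exp s : ℂ) * w)) ω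
          = h ω) := by
  refine ⟨fun ω hω => integrableOn_cexp_neg_mul_comp_exp_mul hlam hh hM hω,
    fun ω hω => (hasDerivAt_integral_cexp_neg_mul_comp_exp_mul hlam hh hM hω).2.differentiableAt,
    fun ω hω => ?_⟩
  rw [(hasDerivAt_integral_cexp_neg_mul_comp_exp_mul hlam hh hM hω).2.deriv]
  exact mul_integral_sub_mul_integral_deriv hlam hh hM hω
end
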